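/- Let n = 1 and 0 < ω < ω_{p,q}. Let β be the smaller positive zero of F (so F < 0 on (0,β) and F > 0 on (β,θ) for the larger zero θ), and let B > 0 be such that Σ < 0 on (0,B) and Σ > 0 on (B,C) for some C ∈ (B,∞]. Then B < β. -/

import Mathlib

/-- The double power nonlinearity `f(u) = -ω u + u^p - u^q`. -/
noncomputable def f (ω p q u : ℝ) : ℝ := -ω * u + u ^ p - u ^ q

/-- The primitive `F(u) = -(ω/2)u² + u^{p+1}/(p+1) - u^{q+1}/(q+1)`. -/
noncomputable def F (ω p q u : ℝ) : ℝ :=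
  -(ω / 2) * u ^ 2 + u ^ (p + 1) / (p + 1) - u ^ (q + 1) / (q + 1)

/-- The critical frequency `ω_{p,q}`. -/
noncomputable def omegaPQ (p q : ℝ) : ℝ :=
  (2 * (q - p) / ((p + 1) * (q - 1))) *
    (((p - 1) * (q + 1)) / ((p + 1) * (q - 1))) ^ ((p - 1) / (q - p))

/-- The Pohozaev polynomial `Σ(u) = 2nF(u) - (n-2)u f(u)`. -/
noncomputable def Sig (n : ℕ) (ω p q u : ℝ) : ℝ :=
  2 * n * F ω p q u - ((n : ℝ) - 2) * u * f ω p q u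

/-!
For `n = 1` one has `Σ(u) = 2F(u) + u f(u)`, so `u · Σ(u)` is the derivative of `u² F(u)`.
This function vanishes at `0` and at the zero `β` of `F`, so by Rolle's theorem `Σ` has a zero
in `(0, β)`; since `Σ < 0` on `(0, B)`, that forces `B < β`.
-/

open Set

lemma hasDerivAt_F {p q : ℝ} (ω : ℝ) (hp : p ≠ -1) (hq : q ≠ -1) {u : ℝ} (hu : u ≠ 0) :
    HasDerivAt (F ω p q) (f ω p q u) u := by
  have hp1 : p + 1 ≠ 0 := fun h => hp (by linarith)
  have hq1 : q + 1 ≠ 0 := fun h => hq (by linarith)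
  have hsq : HasDerivAt (fun x : ℝ => -(ω / 2) * x ^ 2) (-(ω / 2) * (2 * u)) u := by
    simpa using (hasDerivAt_pow 2 u).const_mul (-(ω / 2))
  have hrpow (r : ℝ) : HasDerivAt (fun x : ℝ => x ^ (r + 1)) ((r + 1) * u ^ r) u := by
    simpa using Real.hasDerivAt_rpow_const (p := r + 1) (Or.inl hu)
  refine ((hsq.add ((hrpow p).div_const (p + 1))).sub ((hrpow q).div_const (q + 1))).congr_deriv ?_
  unfold f
  field_simp

lemma continuous_F {p q : ℝ} (ω : ℝ) (hp : -1 ≤ p) (hq : -1 ≤ q) : Continuous (F ω p q) := by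
  have hrpow {r : ℝ} (hr : -1 ≤ r) : Continuous fun x : ℝ => x ^ (r + 1) :=
    continuous_iff_continuousAt.2 fun x =>
      Real.continuousAt_rpow_const x (r + 1) (Or.inr (by linarith))
  unfold F
  fun_prop (disch := assumption)

lemma Sig_one (ω p q u : ℝ) : Sig 1 ω p q u = 2 * F ω p q u + u * f ω p q u := by
  simp only [Sig]
  push_cast
  ring

lemma hasDerivAt_sq_mul_F {p q : ℝ} (ω : ℝ) (hp : p ≠ -1) (hq : q ≠ -1) {u : ℝ} (hu : u ≠ 0) :
    HasDerivAt (fun x => x ^ 2 * F ω p q x) (u * Sig 1 ω p q u) u := by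
  refine ((hasDerivAt_pow 2 u).mul (hasDerivAt_F ω hp hq hu)).congr_deriv ?_
  rw [Sig_one]
  ring

lemma exists_Sig_one_eq_zero_of_F_eq_zero {p q ω β : ℝ} (hp : -1 < p) (hq : -1 < q)
    (hβ : 0 < β) (hFβ : F ω p q β = 0) : ∃ u ∈ Ioo 0 β, Sig 1 ω p q u = 0 := by
  obtain ⟨u, hu, hderiv⟩ := exists_hasDerivAt_eq_zero hβ
    ((continuous_pow 2).mul (continuous_F ω hp.le hq.le)).continuousOn
    (by simp [hFβ])
    fun x hx => hasDerivAt_sq_mul_F ω hp.ne' hq.ne' hx.1.ne'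
  exact ⟨u, hu, (mul_eq_zero.1 hderiv).resolve_left hu.1.ne'⟩

theorem B_lt_beta_general (p q ω : ℝ) (hp : 1 < p) (hpq : p < q)
    (n : ℕ) (hn : n = 1)
    (β : ℝ) (hβ : 0 < β)
    (hFβ : F ω p q β = 0)
    (B : ℝ)
    (hSig1 : ∀ v, 0 < v → v < B → Sig n ω p q v < 0) :
    B < β := by
  subst hn
  obtain ⟨u, ⟨hu0, huβ⟩, hu⟩ :=
    exists_Sig_one_eq_zero_of_F_eq_zero (by linarith) (by linarith) hβ hFβ
  by_contra! hBβ
  exact (hSig1 u hu0 (huβ.trans_le hBβ)).ne hu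

/-- For `n = 1` and `0 < ω < ω_{p,q}`: if `β` is the smaller positive zero of `F`
(`F < 0` on `(0,β)`, `F > 0` on `(β,θ)` with larger zero `θ`) and `B > 0` satisfies
`Σ < 0` on `(0,B)` and `Σ > 0` on `(B,C)` for some `C ∈ (B,∞]`, then `B < β`. -/
theorem B_lt_beta (p q ω : ℝ) (hp : 1 < p) (hpq : p < q) (hω : 0 < ω)
    (n : ℕ) (hn : n = 1) (hωpq : ω < omegaPQ p q)
    (β θ : ℝ) (hβ : 0 < β) (hβθ : β < θ)
    (hF1 : ∀ u, 0 < u → u < β → F ω p q u < 0)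
    (hFβ : F ω p q β = 0)
    (hF2 : ∀ u, β < u → u < θ → 0 < F ω p q u)
    (hFθ : F ω p q θ = 0)
    (B : ℝ) (hB : 0 < B)
    (hSig1 : ∀ v, 0 < v → v < B → Sig n ω p q v < 0)
    (C : EReal) (hBC : (B : EReal) < C)
    (hSig2 : ∀ v : ℝ, B < v → (v : EReal) < C → 0 < Sig n ω p q v) :
    B < β :=
  B_lt_beta_general p q ω hp hpq n hn β hβ hFβ B hSig1
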